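/- Let t > 0 and let a : ℕ → ℝ be a nonnegative sequence with ∑_n a(n)² < ∞. Then ∑_{n=0}^∞ √n · e^{−nt} · a(n) ≤ (e^{−t}/(1 − e^{−2t})) · (∑_{n=0}^∞ a(n)²)^{1/2}, and consequently ∑_{n=0}^∞ √n · e^{−nt} · a(n) ≤ (1/(2t)) · (∑_{n=0}^∞ a(n)²)^{1/2}. -/

import Mathlib

/-!
Cauchy–Schwarz against the weight `bₙ = √n e^{-nt}`: with `r = e^{-2t}` one has
`∑ bₙ² = ∑ n rⁿ = r / (1 - r)²`, so `‖b‖₂ = e^{-t} / (1 - e^{-2t}) = 1 / (2 sinh t)`,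
and `sinh t > t` gives the second bound.
-/

open Real

theorem Real.summable_and_tsum_mul_le_sqrt_mul_sqrt {ι : Type*} {f g : ι → ℝ}
    (hf : ∀ i, 0 ≤ f i) (hg : ∀ i, 0 ≤ g i)
    (hf_sum : Summable fun i => f i ^ 2) (hg_sum : Summable fun i => g i ^ 2) :
    (Summable fun i => f i * g i) ∧
      ∑' i, f i * g i ≤ √(∑' i, f i ^ 2) * √(∑' i, g i ^ 2) := by
  simp_rw [← rpow_two] at hf_sum hg_sum ⊢
  simpa only [sqrt_eq_rpow] using
    summable_and_inner_le_Lp_mul_Lq_tsum_of_nonneg HolderConjugate.two_two hf hg hf_sum hg_sum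

theorem hasSum_sq_sqrt_mul_exp_neg_mul {t : ℝ} (ht : 0 < t) :
    HasSum (fun n : ℕ => (√n * exp (-n * t)) ^ 2) ((exp (-t) / (1 - exp (-2 * t))) ^ 2) := by
  have hr : ‖exp (-2 * t)‖ < 1 := by
    rw [norm_of_nonneg (exp_pos _).le, exp_lt_one_iff]; linarith
  have hterm (n : ℕ) : (√n * exp (-n * t)) ^ 2 = n * exp (-2 * t) ^ n := by
    rw [mul_pow, sq_sqrt n.cast_nonneg, ← exp_nat_mul, ← exp_nat_mul]
    ring_nf
  have hsum : (exp (-t) / (1 - exp (-2 * t))) ^ 2 = exp (-2 * t) / (1 - exp (-2 * t)) ^ 2 := by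
    rw [div_pow, ← exp_nat_mul]
    ring_nf
  simpa only [hterm, hsum] using hasSum_coe_mul_geometric_of_norm_lt_one hr

theorem one_sub_exp_neg_two_mul_pos {t : ℝ} (ht : 0 < t) : 0 < 1 - exp (-2 * t) := by
  rw [sub_pos, exp_lt_one_iff]; linarith

theorem exp_neg_div_one_sub_exp_neg_two_mul_lt {t : ℝ} (ht : 0 < t) :
    exp (-t) / (1 - exp (-2 * t)) < 1 / (2 * t) := by
  have hsinh : 2 * t < exp t - exp (-t) := by
    linarith [sinh_eq t ▸ self_lt_sinh_iff.mpr ht]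
  rw [div_lt_div_iff₀ (one_sub_exp_neg_two_mul_pos ht) (by positivity), one_mul]
  calc exp (-t) * (2 * t) < exp (-t) * (exp t - exp (-t)) := by gcongr
    _ = 1 - exp (-2 * t) := by
      rw [mul_sub, ← exp_add, ← exp_add]; ring_nf; simp

/-- The analytic core of strong ultracontractivity: for `t > 0` and a nonnegative
square-summable sequence `a`,
`∑ √n e^{-nt} a(n) ≤ (e^{-t}/(1-e^{-2t})) ‖a‖₂ ≤ (1/(2t)) ‖a‖₂`. -/
theorem strong_ultracontractivity_core (t : ℝ) (ht : 0 < t)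
    (a : ℕ → ℝ) (ha : ∀ n, 0 ≤ a n)
    (hsum : Summable (fun n => a n ^ 2)) :
    Summable (fun n : ℕ => Real.sqrt (n : ℝ) * Real.exp (-(n : ℝ) * t) * a n) ∧
    (∑' n : ℕ, Real.sqrt (n : ℝ) * Real.exp (-(n : ℝ) * t) * a n) ≤
      Real.exp (-t) / (1 - Real.exp (-2 * t)) * Real.sqrt (∑' n, a n ^ 2) ∧
    (∑' n : ℕ, Real.sqrt (n : ℝ) * Real.exp (-(n : ℝ) * t) * a n) ≤
      1 / (2 * t) * Real.sqrt (∑' n, a n ^ 2) := by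
  have hweight := hasSum_sq_sqrt_mul_exp_neg_mul ht
  obtain ⟨hsummable, hcauchySchwarz⟩ :=
    summable_and_tsum_mul_le_sqrt_mul_sqrt (fun n => by positivity) ha hweight.summable hsum
  have hweight_norm : √(∑' n : ℕ, (√n * exp (-n * t)) ^ 2) = exp (-t) / (1 - exp (-2 * t)) := by
    rw [hweight.tsum_eq, sqrt_sq (div_nonneg (exp_pos _).le (one_sub_exp_neg_two_mul_pos ht).le)]
  have hbound := hweight_norm ▸ hcauchySchwarz
  exact ⟨hsummable, hbound, hbound.trans <|
    mul_le_mul_of_nonneg_right (exp_neg_div_one_sub_exp_neg_two_mul_lt ht).le (sqrt_nonneg _)⟩
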